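/- The ℝ-linear map im ℍ ⊕ im ℍ → Λ²ℍ sending (h, h′) to Λ⁺(h) + Λ⁻(h′) is injective and its image is all of Λ²ℍ; that is, it is an ℝ-linear isomorphism onto the degree-2 component of the exterior algebra of the 4-dimensional real vector space ℍ. -/

import Mathlib

open Quaternion

namespace QuaternionExterior

/-- The purely imaginary quaternions, as a real submodule of `ℍ`. -/
def imH : Submodule ℝ ℍ where
  carrier := {q | q.re = 0}
  add_mem' := by
    intro a b ha hb
    simp only [Set.mem_setOf_eq] at *
    simp [ha, hb]
  zero_mem' := by simp
  smul_mem' := by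
    intro c a ha
    simp only [Set.mem_setOf_eq] at *
    simp [ha]

/-- The quaternion `i`. -/
def qI : ℍ := ⟨0, 1, 0, 0⟩
/-- The quaternion `j`. -/
def qJ : ℍ := ⟨0, 0, 1, 0⟩
/-- The quaternion `k`. -/
def qK : ℍ := ⟨0, 0, 0, 1⟩

open ExteriorAlgebra

/-- `Λ⁺(h) = 1∧h + i∧(hi) + j∧(hj) + k∧(hk)` in the exterior algebra of `ℍ`. -/
noncomputable def Lplus (h : ℍ) : ExteriorAlgebra ℝ ℍ :=
  ι ℝ (1 : ℍ) * ι ℝ h + ι ℝ qI * ι ℝ (h * qI) + ι ℝ qJ * ι ℝ (h * qJ) + ι ℝ qK * ι ℝ (h * qK)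

/-- `Λ⁻(h) = 1∧h + i∧(ih) + j∧(jh) + k∧(kh)` in the exterior algebra of `ℍ`. -/
noncomputable def Lminus (h : ℍ) : ExteriorAlgebra ℝ ℍ :=
  ι ℝ (1 : ℍ) * ι ℝ h + ι ℝ qI * ι ℝ (qI * h) + ι ℝ qJ * ι ℝ (qJ * h) + ι ℝ qK * ι ℝ (qK * h)


/-! Both `Λ⁺` and `Λ⁻` are linear, and on `i, j, k` they give the self-dual and anti-self-dual
forms `Λ^±(i) = 2(1∧i ± j∧k)`, `Λ^±(j) = 2(1∧j ± k∧i)`, `Λ^±(k) = 2(1∧k ± i∧j)`. Half-sums and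
half-differences recover the six wedges of basis vectors, which span `Λ²ℍ`, so the map is onto;
since both sides have dimension `3 + 3 = C(4,2)`, it is also injective. -/
section

variable {R M : Type*} [CommRing R] [AddCommGroup M] [Module R M]

theorem ι_mul_ι_swap (x y : M) : ι R x * ι R y = -(ι R y * ι R x) :=
  eq_neg_of_add_eq_zero_left (ι_add_mul_swap x y)

theorem ι_mul_ι_mem_exteriorPower_two (x y : M) : ι R x * ι R y ∈ ⋀[R]^2 M := by
  rw [exteriorPower, pow_two]
  exact Submodule.mul_mem_mul (LinearMap.mem_range_self _ x) (LinearMap.mem_range_self _ y)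

theorem exteriorPower_two_le_of_span_eq_top {s : Set M} (hs : Submodule.span R s = ⊤)
    {p : Submodule R (ExteriorAlgebra R M)} (h : ∀ x ∈ s, ∀ y ∈ s, ι R x * ι R y ∈ p) :
    ⋀[R]^2 M ≤ p := by
  rw [← exteriorPower.ιMulti_span_fixedDegree_of_span_eq_top R 2 M hs, Submodule.span_le]
  rintro _ ⟨a, ha, rfl⟩
  simpa [ιMulti_apply, List.ofFn_succ, Matrix.vecTail] using h _ (ha ⟨0, rfl⟩) _ (ha ⟨1, rfl⟩)

end

@[simp] theorem qI_re : qI.re = 0 := rfl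
@[simp] theorem qI_imI : qI.imI = 1 := rfl
@[simp] theorem qI_imJ : qI.imJ = 0 := rfl
@[simp] theorem qI_imK : qI.imK = 0 := rfl
@[simp] theorem qJ_re : qJ.re = 0 := rfl
@[simp] theorem qJ_imI : qJ.imI = 0 := rfl
@[simp] theorem qJ_imJ : qJ.imJ = 1 := rfl
@[simp] theorem qJ_imK : qJ.imK = 0 := rfl
@[simp] theorem qK_re : qK.re = 0 := rfl
@[simp] theorem qK_imI : qK.imI = 0 := rfl
@[simp] theorem qK_imJ : qK.imJ = 0 := rfl
@[simp] theorem qK_imK : qK.imK = 1 := rfl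

theorem qI_mul_qI : qI * qI = -1 := by ext <;> simp
theorem qJ_mul_qJ : qJ * qJ = -1 := by ext <;> simp
theorem qK_mul_qK : qK * qK = -1 := by ext <;> simp
theorem qI_mul_qJ : qI * qJ = qK := by ext <;> simp
theorem qJ_mul_qI : qJ * qI = -qK := by ext <;> simp
theorem qJ_mul_qK : qJ * qK = qI := by ext <;> simp
theorem qK_mul_qJ : qK * qJ = -qI := by ext <;> simp
theorem qK_mul_qI : qK * qI = qJ := by ext <;> simp
theorem qI_mul_qK : qI * qK = -qJ := by ext <;> simp

theorem span_one_qI_qJ_qK : Submodule.span ℝ {1, qI, qJ, qK} = (⊤ : Submodule ℝ ℍ) := by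
  refine Submodule.eq_top_iff'.2 fun x => ?_
  have hx : x = x.re • 1 + x.imI • qI + x.imJ • qJ + x.imK • qK := by ext <;> simp
  rw [hx]
  refine add_mem (add_mem (add_mem ?_ ?_) ?_) ?_ <;>
    exact Submodule.smul_mem _ _ (Submodule.subset_span (by simp))

theorem finrank_imH : Module.finrank ℝ imH = 3 := by
  let re : ℍ →ₗ[ℝ] ℝ := QuaternionAlgebra.reₗ _ _ _
  have hre : LinearMap.range re = ⊤ := LinearMap.range_eq_top.2 fun r => ⟨(r : ℍ), rfl⟩
  have := LinearMap.finrank_range_add_finrank_ker re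
  rw [hre, finrank_top, Module.finrank_self, Quaternion.finrank_eq_four] at this
  change 1 + Module.finrank ℝ imH = 4 at this
  omega

theorem finrank_exteriorPower_two : Module.finrank ℝ (⋀[ℝ]^2 ℍ) = 6 := by
  rw [exteriorPower.finrank_eq, Quaternion.finrank_eq_four]
  rfl

noncomputable def Lplusₗ : ℍ →ₗ[ℝ] ExteriorAlgebra ℝ ℍ where
  toFun := Lplus
  map_add' a b := by simp only [Lplus, add_mul, map_add, mul_add]; abel
  map_smul' c a := by simp only [Lplus, smul_mul_assoc, map_smul, mul_smul_comm, smul_add]; rfl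

noncomputable def Lminusₗ : ℍ →ₗ[ℝ] ExteriorAlgebra ℝ ℍ where
  toFun := Lminus
  map_add' a b := by simp only [Lminus, mul_add, map_add]; abel
  map_smul' c a := by simp only [Lminus, mul_smul_comm, map_smul, smul_add]; rfl

theorem Lminus_neg (h : ℍ) : Lminus (-h) = -Lminus h := map_neg Lminusₗ h

theorem Lplus_mem_exteriorPower_two (h : ℍ) : Lplus h ∈ ⋀[ℝ]^2 ℍ := by
  unfold Lplus
  repeat' apply add_mem
  all_goals exact ι_mul_ι_mem_exteriorPower_two _ _

theorem Lminus_mem_exteriorPower_two (h : ℍ) : Lminus h ∈ ⋀[ℝ]^2 ℍ := by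
  unfold Lminus
  repeat' apply add_mem
  all_goals exact ι_mul_ι_mem_exteriorPower_two _ _

theorem Lplus_qI : Lplus qI = (2 : ℝ) • (ι ℝ 1 * ι ℝ qI + ι ℝ qJ * ι ℝ qK) := by
  simp only [Lplus, qI_mul_qI, qI_mul_qJ, qI_mul_qK, map_neg, mul_neg, ι_mul_ι_swap qI 1,
    ι_mul_ι_swap qK qJ]
  module

theorem Lminus_qI : Lminus qI = (2 : ℝ) • (ι ℝ 1 * ι ℝ qI - ι ℝ qJ * ι ℝ qK) := by
  simp only [Lminus, qI_mul_qI, qJ_mul_qI, qK_mul_qI, map_neg, mul_neg, ι_mul_ι_swap qI 1,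
    ι_mul_ι_swap qK qJ]
  module

theorem Lplus_qJ : Lplus qJ = (2 : ℝ) • (ι ℝ 1 * ι ℝ qJ + ι ℝ qK * ι ℝ qI) := by
  simp only [Lplus, qJ_mul_qI, qJ_mul_qJ, qJ_mul_qK, map_neg, mul_neg, ι_mul_ι_swap qJ 1,
    ι_mul_ι_swap qI qK]
  module

theorem Lminus_qJ : Lminus qJ = (2 : ℝ) • (ι ℝ 1 * ι ℝ qJ - ι ℝ qK * ι ℝ qI) := by
  simp only [Lminus, qI_mul_qJ, qJ_mul_qJ, qK_mul_qJ, map_neg, mul_neg, ι_mul_ι_swap qJ 1,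
    ι_mul_ι_swap qI qK]
  module

theorem Lplus_qK : Lplus qK = (2 : ℝ) • (ι ℝ 1 * ι ℝ qK + ι ℝ qI * ι ℝ qJ) := by
  simp only [Lplus, qK_mul_qI, qK_mul_qJ, qK_mul_qK, map_neg, mul_neg, ι_mul_ι_swap qK 1,
    ι_mul_ι_swap qJ qI]
  module

theorem Lminus_qK : Lminus qK = (2 : ℝ) • (ι ℝ 1 * ι ℝ qK - ι ℝ qI * ι ℝ qJ) := by
  simp only [Lminus, qI_mul_qK, qJ_mul_qK, qK_mul_qK, map_neg, mul_neg, ι_mul_ι_swap qK 1,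
    ι_mul_ι_swap qJ qI]
  module

noncomputable def lambdaSum : imH × imH →ₗ[ℝ] ExteriorAlgebra ℝ ℍ :=
  (Lplusₗ ∘ₗ imH.subtype).coprod (Lminusₗ ∘ₗ imH.subtype)

theorem lambdaSum_apply (p : imH × imH) : lambdaSum p = Lplus p.1 + Lminus p.2 := rfl

theorem mem_range_lambdaSum_of_Lplus_Lminus {e : ℍ} (he : e ∈ imH) {a b : ExteriorAlgebra ℝ ℍ}
    (hplus : Lplus e = (2 : ℝ) • (a + b)) (hminus : Lminus e = (2 : ℝ) • (a - b)) :
    a ∈ LinearMap.range lambdaSum ∧ b ∈ LinearMap.range lambdaSum := by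
  refine ⟨⟨(4 : ℝ)⁻¹ • (⟨e, he⟩, ⟨e, he⟩), ?_⟩, ⟨(4 : ℝ)⁻¹ • (⟨e, he⟩, -⟨e, he⟩), ?_⟩⟩
  · rw [map_smul, lambdaSum_apply, hplus, hminus]
    module
  · rw [map_smul, lambdaSum_apply, Submodule.coe_neg, Lminus_neg, hplus, hminus]
    module

theorem range_lambdaSum : LinearMap.range lambdaSum = ⋀[ℝ]^2 ℍ := by
  refine le_antisymm ?_ (exteriorPower_two_le_of_span_eq_top span_one_qI_qJ_qK ?_)
  · rintro _ ⟨p, rfl⟩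
    exact add_mem (Lplus_mem_exteriorPower_two _) (Lminus_mem_exteriorPower_two _)
  obtain ⟨h1I, hJK⟩ := mem_range_lambdaSum_of_Lplus_Lminus rfl Lplus_qI Lminus_qI
  obtain ⟨h1J, hKI⟩ := mem_range_lambdaSum_of_Lplus_Lminus rfl Lplus_qJ Lminus_qJ
  obtain ⟨h1K, hIJ⟩ := mem_range_lambdaSum_of_Lplus_Lminus rfl Lplus_qK Lminus_qK
  rintro x hx y hy
  simp only [Set.mem_insert_iff, Set.mem_singleton_iff] at hx hy
  rcases hx with rfl | rfl | rfl | rfl <;> rcases hy with rfl | rfl | rfl | rfl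
  all_goals first
    | (rw [ι_sq_zero]; exact zero_mem _)
    | assumption
    | (rw [ι_mul_ι_swap]; exact neg_mem ‹_›)

theorem lambdaSum_injective : Function.Injective lambdaSum := by
  have h := LinearMap.finrank_range_add_finrank_ker lambdaSum
  rw [range_lambdaSum, finrank_exteriorPower_two, Module.finrank_prod, finrank_imH] at h
  exact LinearMap.ker_eq_bot.1 (Submodule.finrank_eq_zero.1 (by omega))

/-- The map `(h, h′) ↦ Λ⁺(h) + Λ⁻(h′)` is an ℝ-linear isomorphism from `im ℍ ⊕ im ℍ`
onto the degree-2 component `Λ²ℍ` of the exterior algebra of `ℍ`. -/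
theorem lambda_equiv_degree_two :
    ∃ e : (imH × imH) ≃ₗ[ℝ]
        ((LinearMap.range (ι ℝ : ℍ →ₗ[ℝ] ExteriorAlgebra ℝ ℍ)) ^ 2 :
          Submodule ℝ (ExteriorAlgebra ℝ ℍ)),
      ∀ p : imH × imH, (e p : ExteriorAlgebra ℝ ℍ) = Lplus (p.1 : ℍ) + Lminus (p.2 : ℍ) :=
  ⟨(LinearEquiv.ofInjective lambdaSum lambdaSum_injective).trans
    (LinearEquiv.ofEq _ _ range_lambdaSum), fun _ => rfl⟩

end QuaternionExterior
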